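/- arXiv:1305.7484 — 3 statements merged into one kernel-verified Lean document; each statement's English description precedes it below -/
import Mathlib

section
/- Suppose v ∈ C¹([0,T]×ℝⁿ) and continuous functions p₁,…,p_m : [0,T]×ℝⁿ → ℝ satisfy, for all (t,x) ∈ [0,T]×X, (L_f v)(t,x) + Σ_{i=1}^m p_i(t,x) ≤ 0 and p_i(t,x) ≥ |[L_g v]_i(t,x)| for each i = 1,…,m. Then for every measurable feedback u : [0,T]×ℝⁿ → U and every solution x(·) with control u satisfying x(t) ∈ X for all t ∈ [0,T], the function t ↦ v(t, x(t)) is nonincreasing on [0,T]; in particular v(T, x(T)) ≤ v(0, x(0)). -/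
open MeasureTheory Set Filter
open Topology Asymptotics

noncomputable section

/-- The operator `L_f v (t,x) = ∂v/∂t (t,x) + ∑ i, ∂v/∂x_i (t,x) * f_i (t,x)`,
expressed as the Fréchet derivative of `v` at `(t,x)` applied to `(1, f (t,x))`. -/
def Lf (n : ℕ) (f : ℝ × (Fin n → ℝ) → Fin n → ℝ)
    (v : ℝ × (Fin n → ℝ) → ℝ) : ℝ × (Fin n → ℝ) → ℝ :=
  fun q => fderiv ℝ v q (1, f q)

/-- The operator `[L_g v]_j (t,x) = ∑ i, ∂v/∂x_i (t,x) * g_{ij} (t,x)`. -/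
def Lg (n m : ℕ) (g : ℝ × (Fin n → ℝ) → Fin n → Fin m → ℝ)
    (v : ℝ × (Fin n → ℝ) → ℝ) : ℝ × (Fin n → ℝ) → Fin m → ℝ :=
  fun q j => fderiv ℝ v q (0, fun i => g q i j)

/-- A Carathéodory solution of `ẋ = f(t,x) + g(t,x) u(t,x)` on `[0,T]`: an absolutely
continuous curve satisfying the corresponding integral equation. -/
def IsSolution (n m : ℕ) (T : ℝ) (f : ℝ × (Fin n → ℝ) → Fin n → ℝ)
    (g : ℝ × (Fin n → ℝ) → Fin n → Fin m → ℝ)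
    (u : ℝ × (Fin n → ℝ) → Fin m → ℝ) (x : ℝ → Fin n → ℝ) : Prop :=
  ContinuousOn x (Icc 0 T) ∧
  IntervalIntegrable
    (fun s => (fun i => f (s, x s) i + ∑ j, g (s, x s) i j * u (s, x s) j)) volume 0 T ∧
  ∀ t ∈ Icc (0:ℝ) T,
    x t = x 0 + ∫ s in (0:ℝ)..t, (fun i => f (s, x s) i + ∑ j, g (s, x s) i j * u (s, x s) j)

/-! Along a solution, the upper right Dini derivative of `t ↦ v (t, x t)` is at most
`∂ₜv + ∂ₓv·f + ∑ⱼ |∂ₓv·gⱼ|` at `(t, x t)`, which the dual constraints make nonpositive, and a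
continuous function with nonpositive upper right Dini derivative is nonincreasing.
As `x` is only absolutely continuous, the `x`-part of this chain rule goes through the integral
equation: with `ℓ = ∂ₓv (t, x t)` frozen at `t`, `ℓ (x s) - ℓ (x t) = ∫ ℓ (f + g u)` and
`ℓ (f + g u) ≤ ℓ f + ∑ⱼ |ℓ gⱼ|` because `|uⱼ| ≤ 1`, a bound that is continuous in time. -/

/-- `limsup_{s → t⁺} (φ s - φ t) / (s - t) ≤ c`. -/
def HasUpperRightDiniLE (φ : ℝ → ℝ) (t c : ℝ) : Prop :=
  ∀ r > 0, ∀ᶠ s in 𝓝[>] t, φ s - φ t ≤ (c + r) * (s - t)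

theorem HasUpperRightDiniLE.mono {φ : ℝ → ℝ} {t c c' : ℝ} (h : HasUpperRightDiniLE φ t c)
    (hc : c ≤ c') : HasUpperRightDiniLE φ t c' := fun r hr => by
  filter_upwards [h r hr, self_mem_nhdsWithin] with s hs hts
  nlinarith [sub_pos.2 (show t < s from hts)]

theorem antitoneOn_of_hasUpperRightDiniLE_zero {φ : ℝ → ℝ} {a b : ℝ}
    (hφ : ContinuousOn φ (Icc a b)) (hdini : ∀ t ∈ Ico a b, HasUpperRightDiniLE φ t 0) :
    AntitoneOn φ (Icc a b) := by
  intro s hs t ht hst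
  refine image_le_of_liminf_slope_right_le_deriv_boundary (B := fun _ => φ s)
    (hφ.mono (Icc_subset_Icc hs.1 ht.2)) le_rfl continuousOn_const (fun z _ => hasDerivWithinAt_const z _ (φ s))
    (fun z hz r hr => ?_) ⟨hst, le_rfl⟩
  have hz' : z ∈ Ico a b := ⟨hs.1.trans hz.1, hz.2.trans_le ht.2⟩
  refine Eventually.frequently ?_
  filter_upwards [hdini z hz' (r / 2) (half_pos hr), self_mem_nhdsWithin] with w hw hzw
  rw [slope_def_field, div_lt_iff₀ (sub_pos.2 hzw)]
  nlinarith [sub_pos.2 (show z < w from hzw)]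

theorem hasUpperRightDiniLE_of_sub_le_integral {ψ H : ℝ → ℝ} {t b : ℝ} (htb : t < b)
    (hH : ContinuousOn H (Icc t b)) (hψ : ∀ s ∈ Ioc t b, ψ s - ψ t ≤ ∫ z in t..s, H z) :
    HasUpperRightDiniLE ψ t (H t) := by
  intro r hr
  obtain ⟨δ, hδ, hclose⟩ := Metric.continuousWithinAt_iff.1 (hH t (left_mem_Icc.2 htb.le)) r hr
  filter_upwards [Ioo_mem_nhdsGT (lt_min htb (lt_add_of_pos_right t hδ))] with s hs
  have hsb : s ≤ b := hs.2.le.trans (min_le_left _ _)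
  have hsδ : s < t + δ := hs.2.trans_le (min_le_right _ _)
  have hHle : ∀ z ∈ Icc t s, H z ≤ H t + r := fun z hz => by
    have hdist : dist z t < δ := by
      rw [Real.dist_eq, abs_of_nonneg (sub_nonneg.2 hz.1)]
      linarith [hz.2]
    have := hclose ⟨hz.1, hz.2.trans hsb⟩ hdist
    rw [Real.dist_eq] at this
    linarith [(abs_lt.1 this).2]
  calc ψ s - ψ t ≤ ∫ z in t..s, H z := hψ s ⟨hs.1, hsb⟩
    _ ≤ ∫ _ in t..s, (H t + r) :=
        intervalIntegral.integral_mono_on hs.1.le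
          ((hH.mono (Icc_subset_Icc_right hsb)).intervalIntegrable_of_Icc hs.1.le)
          intervalIntegrable_const hHle
    _ = (H t + r) * (s - t) := by rw [intervalIntegral.integral_const, smul_eq_mul, mul_comm]

theorem HasFDerivAt.hasUpperRightDiniLE_comp {E : Type*} [NormedAddCommGroup E]
    [NormedSpace ℝ E] {v : ℝ × E → ℝ} {D : ℝ × E →L[ℝ] ℝ} {γ : ℝ → E} {t c : ℝ}
    (hv : HasFDerivAt v D (t, γ t)) (hγ : (fun s => γ s - γ t) =O[𝓝[>] t] (fun s => s - t))
    (hDγ : HasUpperRightDiniLE (fun s => D (0, γ s)) t c) :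
    HasUpperRightDiniLE (fun s => v (s, γ s)) t (D (1, 0) + c) := by
  have hincr : (fun s => (s, γ s) - (t, γ t)) =O[𝓝[>] t] (fun s => s - t) :=
    (isBigO_refl (fun s => s - t) _).prod_left hγ
  have htend : Tendsto (fun s => (s, γ s)) (𝓝[>] t) (𝓝 (t, γ t)) := by
    refine tendsto_sub_nhds_zero_iff.1 (hincr.trans_tendsto ?_)
    exact tendsto_sub_nhds_zero_iff.2 (tendsto_nhdsWithin_of_tendsto_nhds tendsto_id)
  have herr := (hv.isLittleO.comp_tendsto htend).trans_isBigO hincr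
  intro r hr
  filter_upwards [herr.def (half_pos hr), hDγ (r / 2) (half_pos hr), self_mem_nhdsWithin]
    with s hs₁ hs₂ hts
  have hts : 0 < s - t := sub_pos.2 hts
  have hsplit : D ((s, γ s) - (t, γ t)) = (s - t) * D (1, 0) + (D (0, γ s) - D (0, γ t)) := by
    have : (s, γ s) - (t, γ t) = (s - t) • ((1 : ℝ), (0 : E)) + ((0 : ℝ), γ s) - (0, γ t) := by
      ext <;> simp
    rw [this, map_sub, map_add, map_smul, smul_eq_mul, add_sub_assoc]
  simp only [Function.comp_apply, Real.norm_eq_abs, _root_.abs_of_pos hts, hsplit] at hs₁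
  linarith [(abs_le.1 hs₁).2]

theorem map_add_sum_smul_le {ι E F : Type*} [Fintype ι] [AddCommGroup E] [Module ℝ E]
    [FunLike F E ℝ] [LinearMapClass F ℝ E ℝ] (ℓ : F) (a : E) (b : ι → E) {c : ι → ℝ}
    (hc : ∀ j, |c j| ≤ 1) : ℓ (a + ∑ j, c j • b j) ≤ ℓ a + ∑ j, |ℓ (b j)| := by
  rw [map_add, map_sum]
  refine add_le_add_right (Finset.sum_le_sum fun j _ => ?_) _
  rw [map_smul, smul_eq_mul]
  calc c j * ℓ (b j) ≤ |c j * ℓ (b j)| := le_abs_self _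
    _ = |c j| * |ℓ (b j)| := abs_mul _ _
    _ ≤ |ℓ (b j)| := mul_le_of_le_one_left (abs_nonneg _) (hc j)

section ClosedLoop

variable {n m : ℕ} {T : ℝ} {f : ℝ × (Fin n → ℝ) → Fin n → ℝ}
  {g : ℝ × (Fin n → ℝ) → Fin n → Fin m → ℝ} {u : ℝ × (Fin n → ℝ) → Fin m → ℝ}
  {x : ℝ → Fin n → ℝ}

def closedLoopField (f : ℝ × (Fin n → ℝ) → Fin n → ℝ) (g : ℝ × (Fin n → ℝ) → Fin n → Fin m → ℝ)
    (u : ℝ × (Fin n → ℝ) → Fin m → ℝ) (x : ℝ → Fin n → ℝ) (s : ℝ) : Fin n → ℝ :=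
  f (s, x s) + ∑ j, u (s, x s) j • fun i => g (s, x s) i j

theorem closedLoopField_eq :
    closedLoopField f g u x =
      fun s => fun i => f (s, x s) i + ∑ j, g (s, x s) i j * u (s, x s) j := by
  ext s i
  simp [closedLoopField, Finset.sum_apply, mul_comm]

theorem IsSolution.intervalIntegrable (hx : IsSolution n m T f g u x) {a b : ℝ}
    (ha : a ∈ Icc 0 T) (hb : b ∈ Icc 0 T) :
    IntervalIntegrable (closedLoopField f g u x) volume a b := by
  rw [closedLoopField_eq]
  refine hx.2.1.mono_set ?_
  rw [uIcc_of_le (ha.1.trans ha.2)]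
  exact uIcc_subset_Icc ha hb

theorem IsSolution.sub_eq_integral (hx : IsSolution n m T f g u x) {a b : ℝ}
    (ha : a ∈ Icc 0 T) (hb : b ∈ Icc 0 T) :
    x b - x a = ∫ s in a..b, closedLoopField f g u x s := by
  have h0 : (0 : ℝ) ∈ Icc 0 T := left_mem_Icc.2 (ha.1.trans ha.2)
  rw [← intervalIntegral.integral_interval_sub_left (hx.intervalIntegrable h0 hb)
    (hx.intervalIntegrable h0 ha), hx.2.2 b hb, hx.2.2 a ha, closedLoopField_eq]
  abel

theorem exists_norm_closedLoopField_le (hf : Continuous f) (hg : Continuous g)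
    (huU : ∀ q j, u q j ∈ Icc (-1 : ℝ) 1) (hxc : ContinuousOn x (Icc 0 T)) :
    ∃ M, ∀ s ∈ Icc 0 T, ‖closedLoopField f g u x s‖ ≤ M := by
  set K := ((fun s => (s, x s)) '' Icc 0 T) ×ˢ univ.pi fun _ : Fin m => Icc (-1 : ℝ) 1
  have hK : IsCompact K :=
    (isCompact_Icc.image_of_continuousOn (continuousOn_id.prodMk hxc)).prod
      (isCompact_univ_pi fun _ => isCompact_Icc)
  have hΦ : Continuous fun y : (ℝ × (Fin n → ℝ)) × (Fin m → ℝ) =>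
      f y.1 + ∑ j, y.2 j • fun i => g y.1 i j := by fun_prop
  obtain ⟨M, hM⟩ := hK.exists_bound_of_continuousOn hΦ.continuousOn
  exact ⟨M, fun s hs => hM ((s, x s), u (s, x s))
    ⟨mem_image_of_mem _ hs, fun j _ => huU (s, x s) j⟩⟩

theorem IsSolution.isBigO_sub (hx : IsSolution n m T f g u x) (hf : Continuous f)
    (hg : Continuous g) (huU : ∀ q j, u q j ∈ Icc (-1 : ℝ) 1) {t : ℝ} (ht : t ∈ Ico 0 T) :
    (fun s => x s - x t) =O[𝓝[>] t] (fun s => s - t) := by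
  obtain ⟨M, hM⟩ := exists_norm_closedLoopField_le hf hg huU hx.1
  refine IsBigO.of_bound M ?_
  filter_upwards [Ioc_mem_nhdsGT ht.2] with s hs
  rw [hx.sub_eq_integral (Ico_subset_Icc_self ht) ⟨ht.1.trans hs.1.le, hs.2⟩, Real.norm_eq_abs]
  refine intervalIntegral.norm_integral_le_of_norm_le_const fun z hz => hM z ?_
  rw [uIoc_of_le hs.1.le] at hz
  exact ⟨ht.1.trans hz.1.le, hz.2.trans hs.2⟩

theorem IsSolution.hasUpperRightDiniLE_map (hx : IsSolution n m T f g u x)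
    (hf : Continuous f) (hg : Continuous g) (huU : ∀ q j, u q j ∈ Icc (-1 : ℝ) 1)
    (ℓ : (Fin n → ℝ) →L[ℝ] ℝ) {t : ℝ} (ht : t ∈ Ico 0 T) :
    HasUpperRightDiniLE (fun s => ℓ (x s)) t
      (ℓ (f (t, x t)) + ∑ j, |ℓ (fun i => g (t, x t) i j)|) := by
  have htT : t ∈ Icc 0 T := Ico_subset_Icc_self ht
  have hγ : ContinuousOn (fun s => (s, x s)) (Icc t T) :=
    continuousOn_id.prodMk (hx.1.mono (Icc_subset_Icc_left ht.1))
  have hcol : ∀ j, Continuous fun q => fun i => g q i j := fun j => by fun_prop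
  have hH : ContinuousOn (fun s => ℓ (f (s, x s)) + ∑ j, |ℓ (fun i => g (s, x s) i j)|)
      (Icc t T) :=
    (ℓ.continuous.comp hf).comp_continuousOn hγ |>.add <|
      continuousOn_finsetSum _ fun j _ => ((ℓ.continuous.comp (hcol j)).comp_continuousOn hγ).abs
  refine hasUpperRightDiniLE_of_sub_le_integral ht.2 hH fun s hs => ?_
  have hsT : s ∈ Icc 0 T := ⟨ht.1.trans hs.1.le, hs.2⟩
  have hint := hx.intervalIntegrable htT hsT
  rw [← map_sub, hx.sub_eq_integral htT hsT, ← ℓ.intervalIntegral_comp_comm hint]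
  exact intervalIntegral.integral_mono_on hs.1.le
    ⟨ℓ.integrable_comp hint.1, ℓ.integrable_comp hint.2⟩ ((hH.mono (Icc_subset_Icc_right hs.2)).intervalIntegrable_of_Icc hs.1.le)
    fun z _ => map_add_sum_smul_le ℓ _ _ fun j => abs_le.2 (huU (z, x z) j)

end ClosedLoop

theorem Lf_eq_add {n : ℕ} (f : ℝ × (Fin n → ℝ) → Fin n → ℝ) (v : ℝ × (Fin n → ℝ) → ℝ)
    (q : ℝ × (Fin n → ℝ)) : Lf n f v q = fderiv ℝ v q (1, 0) + fderiv ℝ v q (0, f q) := by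
  rw [Lf, ← map_add, Prod.mk_add_mk, add_zero, zero_add]

theorem dual_constraints_imply_v_nonincreasing_general
    (n m : ℕ) (T : ℝ) (hT : 0 < T)
    (f : ℝ × (Fin n → ℝ) → Fin n → ℝ) (g : ℝ × (Fin n → ℝ) → Fin n → Fin m → ℝ)
    (hf : Continuous f) (hg : Continuous g)
    (X : Set (Fin n → ℝ))
    (v : ℝ × (Fin n → ℝ) → ℝ) (hv : ContDiff ℝ 1 v)
    (p : Fin m → ℝ × (Fin n → ℝ) → ℝ)
    (hineq1 : ∀ q ∈ Icc (0:ℝ) T ×ˢ X, Lf n f v q + ∑ i, p i q ≤ 0)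
    (hineq2 : ∀ q ∈ Icc (0:ℝ) T ×ˢ X, ∀ i, |Lg n m g v q i| ≤ p i q)
    (u : ℝ × (Fin n → ℝ) → Fin m → ℝ)
    (huU : ∀ q j, u q j ∈ Icc (-1:ℝ) 1)
    (x : ℝ → Fin n → ℝ) (hx : IsSolution n m T f g u x)
    (hxX : ∀ t ∈ Icc (0:ℝ) T, x t ∈ X) :
    AntitoneOn (fun t => v (t, x t)) (Icc 0 T) ∧ v (T, x T) ≤ v (0, x 0) := by
  have hdini : ∀ t ∈ Ico 0 T, HasUpperRightDiniLE (fun t => v (t, x t)) t 0 := by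
    intro t ht
    have hq : (t, x t) ∈ Icc 0 T ×ˢ X :=
      ⟨Ico_subset_Icc_self ht, hxX t (Ico_subset_Icc_self ht)⟩
    set D := fderiv ℝ v (t, x t)
    have hdual : D (1, 0) + (D (0, f (t, x t)) + ∑ j, |Lg n m g v (t, x t) j|) ≤ 0 := by
      have hsum := Finset.sum_le_sum (s := Finset.univ) fun j _ => hineq2 _ hq j
      linarith [Lf_eq_add f v (t, x t), hineq1 _ hq]
    exact ((hv.differentiable one_ne_zero _).hasFDerivAt.hasUpperRightDiniLE_comp
      (hx.isBigO_sub hf hg huU ht)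
      (hx.hasUpperRightDiniLE_map hf hg huU (D.comp (.inr ℝ ℝ _)) ht)).mono hdual
  have hanti : AntitoneOn (fun t => v (t, x t)) (Icc 0 T) :=
    antitoneOn_of_hasUpperRightDiniLE_zero
      (hv.continuous.comp_continuousOn (continuousOn_id.prodMk hx.1)) hdini
  exact ⟨hanti, hanti ⟨le_rfl, hT.le⟩ ⟨hT.le, le_rfl⟩ hT.le⟩

theorem dual_constraints_imply_v_nonincreasing
    (n m : ℕ) (T : ℝ) (hT : 0 < T)
    (f : ℝ × (Fin n → ℝ) → Fin n → ℝ) (g : ℝ × (Fin n → ℝ) → Fin n → Fin m → ℝ)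
    (hf : Continuous f) (hg : Continuous g)
    (X : Set (Fin n → ℝ)) (hX : IsCompact X)
    (v : ℝ × (Fin n → ℝ) → ℝ) (hv : ContDiff ℝ 1 v)
    (p : Fin m → ℝ × (Fin n → ℝ) → ℝ) (hp : ∀ i, Continuous (p i))
    (hineq1 : ∀ q ∈ Icc (0:ℝ) T ×ˢ X, Lf n f v q + ∑ i, p i q ≤ 0)
    (hineq2 : ∀ q ∈ Icc (0:ℝ) T ×ˢ X, ∀ i, |Lg n m g v q i| ≤ p i q)
    (u : ℝ × (Fin n → ℝ) → Fin m → ℝ) (hu : Measurable u)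
    (huU : ∀ q j, u q j ∈ Icc (-1:ℝ) 1)
    (x : ℝ → Fin n → ℝ) (hx : IsSolution n m T f g u x)
    (hxX : ∀ t ∈ Icc (0:ℝ) T, x t ∈ X) :
    AntitoneOn (fun t => v (t, x t)) (Icc 0 T) ∧ v (T, x T) ≤ v (0, x 0) :=
  dual_constraints_imply_v_nonincreasing_general n m T hT f g hf hg X v hv p hineq1 hineq2 u huU x
    hx hxX
end
end

section
/- Let (v, w, p) be feasible for the dual program D, i.e., v ∈ C¹([0,T]×ℝⁿ), w : ℝⁿ → ℝ continuous with w ≥ 0 on X, continuous p₁,…,p_m with (L_f v) + Σ_{i=1}^m p_i ≤ 0 and p_i ≥ |[L_g v]_i| on [0,T]×X, w(x) ≥ v(0,x) + 1 for x ∈ X, and v(T,x) ≥ 0 for x ∈ X_T. Then for every measurable feedback u : [0,T]×ℝⁿ → U, the backward reachable set satisfies 𝒳(u) ⊆ {x ∈ ℝⁿ : w(x) ≥ 1}. -/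
/-!
Along a solution `x`, the function `t ↦ v (t, x t)` is nonincreasing: its derivative is
`L_f v + ∑ j, u_j [L_g v]_j ≤ L_f v + ∑ j, p_j ≤ 0` because `|u_j| ≤ 1`. As `x` is only
absolutely continuous, this is proved through right Dini derivatives: the right-hand side of
the equation is bounded on the compact set `[0,T] × X`, so near every time `c` the mean value
theorem and the continuity of `Dv` bound `v (z, x z) - v (c, x c)` by an arbitrarily small
multiple of `z - c`. Hence `0 ≤ v (T, x T) ≤ v (0, x 0) ≤ w (x 0) - 1`.
-/

open MeasureTheory Set Filter

noncomputable section

/-- The backward reachable set `𝒳(u)` for feedback `u`. -/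
def BRS (n m : ℕ) (T : ℝ) (f : ℝ × (Fin n → ℝ) → Fin n → ℝ)
    (g : ℝ × (Fin n → ℝ) → Fin n → Fin m → ℝ)
    (X XT : Set (Fin n → ℝ)) (u : ℝ × (Fin n → ℝ) → Fin m → ℝ) : Set (Fin n → ℝ) :=
  {x₀ | ∃ x : ℝ → Fin n → ℝ, IsSolution n m T f g u x ∧ x 0 = x₀ ∧
    (∀ t ∈ Icc (0:ℝ) T, x t ∈ X) ∧ x T ∈ XT}

open Topology

section IntegralCurve

variable {G : Type*} [NormedAddCommGroup G] [NormedSpace ℝ G] {γ γ' : ℝ → G} {a b M : ℝ}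

theorem sub_eq_integral_of_eq_add_integral
    (hγ : ∀ t ∈ Icc a b, γ t = γ a + ∫ s in a..t, γ' s)
    (hγ' : IntervalIntegrable γ' volume a b) {c z : ℝ} (hc : c ∈ Icc a b) (hz : z ∈ Icc a b) :
    γ z - γ c = ∫ s in c..z, γ' s := by
  have hint : ∀ t ∈ Icc a b, IntervalIntegrable γ' volume a t := fun t ht =>
    hγ'.mono_set <| by
      rw [uIcc_of_le ht.1, uIcc_of_le (ht.1.trans ht.2)]
      exact Icc_subset_Icc_right ht.2
  rw [hγ z hz, hγ c hc, add_sub_add_left_eq_sub,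
    intervalIntegral.integral_interval_sub_left (hint z hz) (hint c hc)]

theorem norm_sub_le_of_eq_add_integral
    (hγ : ∀ t ∈ Icc a b, γ t = γ a + ∫ s in a..t, γ' s)
    (hγ' : IntervalIntegrable γ' volume a b) (hM : ∀ s ∈ Icc a b, ‖γ' s‖ ≤ M)
    {c z : ℝ} (hc : c ∈ Icc a b) (hz : z ∈ Icc a b) (hcz : c ≤ z) :
    ‖γ z - γ c‖ ≤ M * (z - c) := by
  rw [sub_eq_integral_of_eq_add_integral hγ hγ' hc hz]
  refine (intervalIntegral.norm_integral_le_of_norm_le_const fun s hs => ?_).trans_eq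
    (by rw [abs_of_nonneg (sub_nonneg.2 hcz)])
  rw [uIoc_of_le hcz] at hs
  exact hM s ⟨hc.1.trans hs.1.le, hs.2.trans hz.2⟩

theorem continuousOn_of_eq_add_integral
    (hγ : ∀ t ∈ Icc a b, γ t = γ a + ∫ s in a..t, γ' s)
    (hγ' : IntervalIntegrable γ' volume a b) (hab : a ≤ b) :
    ContinuousOn γ (Icc a b) := by
  have h := (intervalIntegral.continuousOn_primitive_interval' hγ' left_mem_uIcc).const_add (γ a)
  rw [uIcc_of_le hab] at h
  exact h.congr hγ

theorem ContinuousLinearMap.apply_sub_le_of_eq_add_integral [CompleteSpace G] (L : G →L[ℝ] ℝ)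
    (hγ : ∀ t ∈ Icc a b, γ t = γ a + ∫ s in a..t, γ' s)
    (hγ' : IntervalIntegrable γ' volume a b) {K c z : ℝ} (hc : c ∈ Icc a b) (hz : z ∈ Icc a b)
    (hcz : c ≤ z) (hK : ∀ s ∈ Icc c z, L (γ' s) ≤ K) :
    L (γ z - γ c) ≤ K * (z - c) := by
  have hγ'cz : IntervalIntegrable γ' volume c z :=
    hγ'.mono_set <| by
      rw [uIcc_of_le (hc.1.trans hc.2), uIcc_of_le hcz]
      exact Icc_subset_Icc hc.1 hz.2
  rw [sub_eq_integral_of_eq_add_integral hγ hγ' hc hz, ← L.intervalIntegral_comp_comm hγ'cz]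
  calc ∫ s in c..z, L (γ' s) ≤ ∫ _ in c..z, K :=
        intervalIntegral.integral_mono_on hcz
          ⟨L.integrable_comp hγ'cz.1, L.integrable_comp hγ'cz.2⟩ intervalIntegrable_const hK
    _ = K * (z - c) := by rw [intervalIntegral.integral_const, smul_eq_mul, mul_comm]

variable [CompleteSpace G] {v : G → ℝ}

theorem eventually_sub_le_of_fderiv_apply_nonpos (hv : ContDiff ℝ 1 v)
    (hγ : ∀ t ∈ Icc a b, γ t = γ a + ∫ s in a..t, γ' s)
    (hγ' : IntervalIntegrable γ' volume a b) (hM : ∀ s ∈ Icc a b, ‖γ' s‖ ≤ M)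
    (hnonpos : ∀ s ∈ Icc a b, fderiv ℝ v (γ s) (γ' s) ≤ 0) {c : ℝ} (hc : c ∈ Ico a b)
    {η : ℝ} (hη : 0 < η) :
    ∀ᶠ z in 𝓝[>] c, v (γ z) - v (γ c) ≤ 2 * η * M * (z - c) := by
  have hcI : c ∈ Icc a b := Ico_subset_Icc_self hc
  have hM0 : 0 ≤ M := (norm_nonneg _).trans (hM c hcI)
  set L := fderiv ℝ v (γ c)
  obtain ⟨ρ, hρ, hball⟩ := Metric.continuousAt_iff.1
    ((hv.continuous_fderiv one_ne_zero).continuousAt (x := γ c)) η hη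
  have hρM : 0 < ρ / (M + 1) := by positivity
  filter_upwards [Ioo_mem_nhdsGT (lt_min hc.2 (lt_add_of_pos_right c hρM))] with z hz
  have hzI : z ∈ Icc a b := ⟨hcI.1.trans hz.1.le, hz.2.le.trans (min_le_left _ _)⟩
  have hsI : ∀ s ∈ Icc c z, s ∈ Icc a b := fun s hs => ⟨hcI.1.trans hs.1, hs.2.trans hzI.2⟩
  have hγzc := norm_sub_le_of_eq_add_integral hγ hγ' hM hcI hzI hz.1.le
  have hnear : ∀ s ∈ Icc c z, γ s ∈ Metric.ball (γ c) ρ := by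
    intro s hs
    have hzc : (M + 1) * (z - c) < ρ := by
      have := hz.2.trans_le (min_le_right _ _)
      rwa [← sub_lt_iff_lt_add', lt_div_iff₀ (by positivity), mul_comm] at this
    rw [Metric.mem_ball, dist_eq_norm]
    calc ‖γ s - γ c‖ ≤ M * (s - c) := norm_sub_le_of_eq_add_integral hγ hγ' hM hcI (hsI s hs) hs.1
      _ ≤ (M + 1) * (z - c) := by gcongr <;> linarith [hs.1, hs.2]
      _ < ρ := hzc
  have hclose : ∀ s ∈ Icc c z, ‖fderiv ℝ v (γ s) - L‖ ≤ η := fun s hs => by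
    rw [← dist_eq_norm]
    exact (hball (hnear s hs)).le
  -- Freezing the derivative at `γ c` costs `η M (z - c)` twice: in the mean value theorem and
  -- in the integral of `L ∘ γ'`, whose integrand `Dv (γ s) (γ' s)` is nonpositive.
  have hmvt : ‖v (γ z) - v (γ c) - L (γ z - γ c)‖ ≤ η * ‖γ z - γ c‖ :=
    Convex.norm_image_sub_le_of_norm_fderiv_le'
      (fun _ _ => (hv.differentiable one_ne_zero).differentiableAt)
      (fun q hq => by rw [← dist_eq_norm]; exact (hball hq).le) (convex_ball _ _)
      (Metric.mem_ball_self hρ) (hnear z ⟨hz.1.le, le_rfl⟩)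
  have hlin : L (γ z - γ c) ≤ η * M * (z - c) := by
    refine L.apply_sub_le_of_eq_add_integral hγ hγ' hcI hzI hz.1.le fun s hs => ?_
    have hperturb : -((fderiv ℝ v (γ s) - L) (γ' s)) ≤ η * M :=
      (neg_le_abs _).trans (((fderiv ℝ v (γ s) - L).le_opNorm _).trans
        (mul_le_mul (hclose s hs) (hM s (hsI s hs)) (norm_nonneg _) hη.le))
    rw [sub_apply] at hperturb
    linarith [hnonpos s (hsI s hs)]
  calc v (γ z) - v (γ c) = (v (γ z) - v (γ c) - L (γ z - γ c)) + L (γ z - γ c) := by ring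
    _ ≤ η * (M * (z - c)) + η * M * (z - c) := by
        gcongr
        exact (le_abs_self _).trans (hmvt.trans (by gcongr))
    _ = 2 * η * M * (z - c) := by ring

theorem le_of_fderiv_apply_nonpos_of_eq_add_integral (hv : ContDiff ℝ 1 v)
    (hγ : ∀ t ∈ Icc a b, γ t = γ a + ∫ s in a..t, γ' s)
    (hγ' : IntervalIntegrable γ' volume a b) (hM : ∀ s ∈ Icc a b, ‖γ' s‖ ≤ M)
    (hnonpos : ∀ s ∈ Icc a b, fderiv ℝ v (γ s) (γ' s) ≤ 0) (hab : a ≤ b) :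
    v (γ b) ≤ v (γ a) := by
  have hcont : ContinuousOn (v ∘ γ) (Icc a b) :=
    hv.continuous.comp_continuousOn (continuousOn_of_eq_add_integral hγ hγ' hab)
  refine image_le_of_liminf_slope_right_le_deriv_boundary (B := fun _ => v (γ a)) hcont le_rfl
    continuousOn_const (fun c _ => hasDerivWithinAt_const c _ _) (fun c hc r hr => ?_)
    ⟨hab, le_rfl⟩
  have hM0 : 0 ≤ M := (norm_nonneg _).trans (hM c (Ico_subset_Icc_self hc))
  have hη : 0 < r / (2 * (M + 1)) := by positivity
  refine Eventually.frequently ?_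
  filter_upwards [eventually_sub_le_of_fderiv_apply_nonpos hv hγ hγ' hM hnonpos hc hη,
    self_mem_nhdsWithin] with z hz (hcz : c < z)
  rw [slope_def_field, div_lt_iff₀ (sub_pos.2 hcz)]
  calc (v ∘ γ) z - (v ∘ γ) c ≤ 2 * (r / (2 * (M + 1))) * M * (z - c) := hz
    _ < r * (z - c) := by
      gcongr
      rw [show 2 * (r / (2 * (M + 1))) * M = r * M / (M + 1) by field_simp,
        div_lt_iff₀ (by positivity)]
      linarith

end IntegralCurve

section TimeGraph

variable {E E' : Type*} [NormedAddCommGroup E] [NormedAddCommGroup E'] {a b : ℝ}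

theorem IntervalIntegrable.prodMk {μ : Measure ℝ} {f : ℝ → E} {g : ℝ → E'}
    (hf : IntervalIntegrable f μ a b) (hg : IntervalIntegrable g μ a b) :
    IntervalIntegrable (fun s => (f s, g s)) μ a b :=
  ⟨hf.1.prodMk hg.1, hf.2.prodMk hg.2⟩

variable [NormedSpace ℝ E] [NormedSpace ℝ E'] [CompleteSpace E]

theorem intervalIntegral_pair [CompleteSpace E'] {μ : Measure ℝ} {f : ℝ → E} {g : ℝ → E'}
    (hf : IntervalIntegrable f μ a b) (hg : IntervalIntegrable g μ a b) :
    ∫ s in a..b, (f s, g s) ∂μ = (∫ s in a..b, f s ∂μ, ∫ s in a..b, g s ∂μ) := by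
  simp only [intervalIntegral, integral_pair hf.1 hg.1, integral_pair hf.2 hg.2, Prod.mk_sub_mk]

theorem prodMk_eq_add_integral {x F : ℝ → E}
    (hx : ∀ t ∈ Icc a b, x t = x a + ∫ s in a..t, F s) (hF : IntervalIntegrable F volume a b)
    (t : ℝ) (ht : t ∈ Icc a b) :
    (t, x t) = (a, x a) + ∫ s in a..t, ((1 : ℝ), F s) := by
  have hFt : IntervalIntegrable F volume a t :=
    hF.mono_set <| by
      rw [uIcc_of_le ht.1, uIcc_of_le (ht.1.trans ht.2)]
      exact Icc_subset_Icc_right ht.2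
  rw [intervalIntegral_pair intervalIntegrable_const hFt, intervalIntegral.integral_const,
    smul_eq_mul, mul_one, Prod.mk_add_mk, ← hx t ht, add_sub_cancel]

end TimeGraph

section ControlAffine

variable {n m : ℕ}

theorem controlAffine_eq_add_sum_smul (f₀ : Fin n → ℝ) (G : Fin n → Fin m → ℝ)
    (μ : Fin m → ℝ) :
    (fun i => f₀ i + ∑ j, G i j * μ j) = f₀ + ∑ j, μ j • fun i => G i j := by
  ext i
  simp [Finset.sum_apply, mul_comm]

theorem norm_controlAffine_le (f₀ : Fin n → ℝ) (G : Fin n → Fin m → ℝ) {μ : Fin m → ℝ}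
    (hμ : ∀ j, |μ j| ≤ 1) :
    ‖fun i => f₀ i + ∑ j, G i j * μ j‖ ≤ ‖f₀‖ + m * ‖G‖ := by
  have hcol : ∀ j, ‖fun i => G i j‖ ≤ ‖G‖ := fun j =>
    (pi_norm_le_iff_of_nonneg (norm_nonneg G)).2 fun i =>
      (norm_le_pi_norm (G i) j).trans (norm_le_pi_norm G i)
  rw [controlAffine_eq_add_sum_smul]
  calc ‖f₀ + ∑ j, μ j • fun i => G i j‖ ≤ ‖f₀‖ + ∑ j, ‖μ j • fun i => G i j‖ :=
        (norm_add_le _ _).trans (add_le_add_right (norm_sum_le _ _) _)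
    _ ≤ ‖f₀‖ + ∑ _j : Fin m, ‖G‖ := by
        gcongr with j
        rw [norm_smul, Real.norm_eq_abs]
        exact (mul_le_of_le_one_left (norm_nonneg _) (hμ j)).trans (hcol j)
    _ = ‖f₀‖ + m * ‖G‖ := by simp

theorem fderiv_apply_controlAffine (f : ℝ × (Fin n → ℝ) → Fin n → ℝ)
    (g : ℝ × (Fin n → ℝ) → Fin n → Fin m → ℝ) (v : ℝ × (Fin n → ℝ) → ℝ)
    (q : ℝ × (Fin n → ℝ)) (μ : Fin m → ℝ) :
    fderiv ℝ v q (1, fun i => f q i + ∑ j, g q i j * μ j) =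
      Lf n f v q + ∑ j, μ j * Lg n m g v q j := by
  have hsplit : ((1 : ℝ), fun i => f q i + ∑ j, g q i j * μ j) =
      (1, f q) + ∑ j, μ j • ((0 : ℝ), fun i => g q i j) := by
    rw [controlAffine_eq_add_sum_smul]
    ext <;> simp [Prod.fst_sum, Prod.snd_sum]
  rw [hsplit, map_add, map_sum]
  simp only [map_smul, smul_eq_mul]
  rfl

theorem fderiv_apply_controlAffine_nonpos {f : ℝ × (Fin n → ℝ) → Fin n → ℝ}
    {g : ℝ × (Fin n → ℝ) → Fin n → Fin m → ℝ} {v : ℝ × (Fin n → ℝ) → ℝ}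
    {q : ℝ × (Fin n → ℝ)} {P μ : Fin m → ℝ} (hLf : Lf n f v q + ∑ j, P j ≤ 0)
    (hLg : ∀ j, |Lg n m g v q j| ≤ P j) (hμ : ∀ j, |μ j| ≤ 1) :
    fderiv ℝ v q (1, fun i => f q i + ∑ j, g q i j * μ j) ≤ 0 := by
  have hterm : ∀ j, μ j * Lg n m g v q j ≤ P j := fun j =>
    calc μ j * Lg n m g v q j ≤ |μ j| * |Lg n m g v q j| := by
          rw [← abs_mul]
          exact le_abs_self _
      _ ≤ P j := (mul_le_of_le_one_left (abs_nonneg _) (hμ j)).trans (hLg j)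
  rw [fderiv_apply_controlAffine]
  linarith [Finset.sum_le_sum fun j (_ : j ∈ Finset.univ) => hterm j]

end ControlAffine

theorem BRS_subset_superlevel_set_of_dual_feasible_general
    (n m : ℕ) (T : ℝ) (hT : 0 < T)
    (f : ℝ × (Fin n → ℝ) → Fin n → ℝ) (g : ℝ × (Fin n → ℝ) → Fin n → Fin m → ℝ)
    (hf : Continuous f) (hg : Continuous g)
    (X : Set (Fin n → ℝ)) (hX : IsCompact X)
    (XT : Set (Fin n → ℝ))
    (v : ℝ × (Fin n → ℝ) → ℝ) (hv : ContDiff ℝ 1 v)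
    (w : (Fin n → ℝ) → ℝ)
    (p : Fin m → ℝ × (Fin n → ℝ) → ℝ)
    (hineq1 : ∀ q ∈ Icc (0:ℝ) T ×ˢ X, Lf n f v q + ∑ i, p i q ≤ 0)
    (hineq2 : ∀ q ∈ Icc (0:ℝ) T ×ˢ X, ∀ i, |Lg n m g v q i| ≤ p i q)
    (hineq3 : ∀ y ∈ X, v (0, y) + 1 ≤ w y)
    (hineq4 : ∀ y ∈ XT, 0 ≤ v (T, y))
    (u : ℝ × (Fin n → ℝ) → Fin m → ℝ)
    (huU : ∀ q j, u q j ∈ Icc (-1:ℝ) 1) :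
    BRS n m T f g X XT u ⊆ {y | 1 ≤ w y} := by
  rintro _ ⟨x, ⟨-, hF, hx⟩, rfl, hxX, hxT⟩
  have hK : IsCompact (Icc (0:ℝ) T ×ˢ X) := isCompact_Icc.prod hX
  obtain ⟨Cf, hCf⟩ := hK.exists_bound_of_continuousOn hf.continuousOn
  obtain ⟨Cg, hCg⟩ := hK.exists_bound_of_continuousOn hg.continuousOn
  have hmem : ∀ s ∈ Icc 0 T, (s, x s) ∈ Icc (0:ℝ) T ×ˢ X := fun s hs => ⟨hs, hxX s hs⟩
  have hu : ∀ q j, |u q j| ≤ 1 := fun q j => abs_le.2 (huU q j)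
  have hbound : ∀ s ∈ Icc 0 T,
      ‖((1 : ℝ), fun i => f (s, x s) i + ∑ j, g (s, x s) i j * u (s, x s) j)‖ ≤
        max 1 (Cf + m * Cg) := fun s hs => by
    rw [Prod.norm_mk, norm_one]
    refine max_le_max le_rfl ((norm_controlAffine_le _ _ (hu _)).trans ?_)
    gcongr
    exacts [hCf _ (hmem s hs), hCg _ (hmem s hs)]
  have hdecrease : v (T, x T) ≤ v (0, x 0) :=
    le_of_fderiv_apply_nonpos_of_eq_add_integral (γ := fun t => (t, x t)) hv
      (prodMk_eq_add_integral hx hF) (intervalIntegrable_const.prodMk hF) hbound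
      (fun s hs => fderiv_apply_controlAffine_nonpos (hineq1 _ (hmem s hs))
        (hineq2 _ (hmem s hs)) (hu _)) hT.le
  show 1 ≤ w (x 0)
  linarith [hineq3 _ (hxX 0 ⟨le_rfl, hT.le⟩), hineq4 _ hxT]

theorem BRS_subset_superlevel_set_of_dual_feasible
    (n m : ℕ) (T : ℝ) (hT : 0 < T)
    (f : ℝ × (Fin n → ℝ) → Fin n → ℝ) (g : ℝ × (Fin n → ℝ) → Fin n → Fin m → ℝ)
    (hf : Continuous f) (hg : Continuous g)
    (X : Set (Fin n → ℝ)) (hX : IsCompact X)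
    (XT : Set (Fin n → ℝ)) (hXT : IsCompact XT) (hXTsub : XT ⊆ X)
    (v : ℝ × (Fin n → ℝ) → ℝ) (hv : ContDiff ℝ 1 v)
    (w : (Fin n → ℝ) → ℝ) (hw : Continuous w) (hwpos : ∀ y ∈ X, 0 ≤ w y)
    (p : Fin m → ℝ × (Fin n → ℝ) → ℝ) (hp : ∀ i, Continuous (p i))
    (hineq1 : ∀ q ∈ Icc (0:ℝ) T ×ˢ X, Lf n f v q + ∑ i, p i q ≤ 0)
    (hineq2 : ∀ q ∈ Icc (0:ℝ) T ×ˢ X, ∀ i, |Lg n m g v q i| ≤ p i q)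
    (hineq3 : ∀ y ∈ X, v (0, y) + 1 ≤ w y)
    (hineq4 : ∀ y ∈ XT, 0 ≤ v (T, y))
    (u : ℝ × (Fin n → ℝ) → Fin m → ℝ) (hu : Measurable u)
    (huU : ∀ q j, u q j ∈ Icc (-1:ℝ) 1) :
    BRS n m T f g X XT u ⊆ {y | 1 ≤ w y} :=
  BRS_subset_superlevel_set_of_dual_feasible_general n m T hT f g hf hg X hX XT v hv w p hineq1
    hineq2 hineq3 hineq4 u huU
end
end

section
/- Suppose nonnegative finite Borel measures σ⁺_j, σ⁻_j, σ̂_j (j = 1,…,m) and μ on [0,T]×X, μ₀ on X, and μ_T on X_T satisfy: (i) σ⁺_j + σ⁻_j + σ̂_j = μ for each j; and (ii) Liouville's equation: for every v ∈ C¹([0,T]×ℝⁿ), ∫ v(T,y) dμ_T(y) = ∫ v(0,x) dμ₀(x) + ∫ (L_f v) dμ + Σ_{j=1}^m ∫ [L_g v]_j d(σ⁺_j − σ⁻_j). Then there exists a Borel measurable ũ : [0,T]×X → U = [-1,1]^m such that for every v ∈ C¹([0,T]×ℝⁿ): ∫ v(T,y) dμ_T(y) = ∫ v(0,x) dμ₀(x)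 + ∫_{[0,T]×X} [ (L_f v)(t,y) + Σ_{j=1}^m [L_g v]_j(t,y) ũ_j(t,y) ] dμ(t,y). -/
open MeasureTheory Set Filter

noncomputable section

namespace MeasureTheory

variable {α : Type*} [MeasurableSpace α] {μ ν ν₁ ν₂ : Measure α}

/-- When `ν₁ + ν₂ ≤ μ` the truncation to `[-1, 1]` changes the density only on a `μ`-null set
(`signedDensity_ae_eq`); it makes the bound hold everywhere. -/
def signedDensity (ν₁ ν₂ μ : Measure α) (x : α) : ℝ :=
  projIcc (-1) 1 (by norm_num) ((ν₁.rnDeriv μ x).toReal - (ν₂.rnDeriv μ x).toReal)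

lemma signedDensity_mem_Icc (ν₁ ν₂ μ : Measure α) (x : α) :
    signedDensity ν₁ ν₂ μ x ∈ Icc (-1 : ℝ) 1 :=
  (projIcc _ _ _ _).prop

lemma abs_signedDensity_le_one (ν₁ ν₂ μ : Measure α) (x : α) : |signedDensity ν₁ ν₂ μ x| ≤ 1 :=
  abs_le.2 (signedDensity_mem_Icc ν₁ ν₂ μ x)

lemma measurable_signedDensity (ν₁ ν₂ μ : Measure α) : Measurable (signedDensity ν₁ ν₂ μ) :=
  (continuous_subtype_val.comp continuous_projIcc).measurable.comp
    ((Measure.measurable_rnDeriv _ _).ennreal_toReal.sub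
      (Measure.measurable_rnDeriv _ _).ennreal_toReal)

lemma abs_rnDeriv_toReal_sub_le_one [SigmaFinite μ] (h : ν₁ + ν₂ ≤ μ) :
    ∀ᵐ x ∂μ, |(ν₁.rnDeriv μ x).toReal - (ν₂.rnDeriv μ x).toReal| ≤ 1 := by
  have := Measure.sigmaFinite_of_le μ ((Measure.le_add_right le_rfl).trans h)
  have := Measure.sigmaFinite_of_le μ ((Measure.le_add_left le_rfl).trans h)
  filter_upwards [Measure.rnDeriv_le_one_of_le h, Measure.rnDeriv_add' ν₁ ν₂ μ,
    Measure.rnDeriv_ne_top ν₁ μ, Measure.rnDeriv_ne_top ν₂ μ] with x hle hadd h₁ h₂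
  have hsum : (ν₁.rnDeriv μ x).toReal + (ν₂.rnDeriv μ x).toReal ≤ 1 := by
    rw [← ENNReal.toReal_add h₁ h₂, ← ENNReal.toReal_one]
    exact ENNReal.toReal_mono ENNReal.one_ne_top (hadd.symm.trans_le hle)
  have := (ν₁.rnDeriv μ x).toReal_nonneg
  have := (ν₂.rnDeriv μ x).toReal_nonneg
  exact abs_sub_le_iff.2 ⟨by linarith, by linarith⟩

lemma signedDensity_ae_eq [SigmaFinite μ] (h : ν₁ + ν₂ ≤ μ) :
    signedDensity ν₁ ν₂ μ =ᵐ[μ] fun x => (ν₁.rnDeriv μ x).toReal - (ν₂.rnDeriv μ x).toReal := by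
  filter_upwards [abs_rnDeriv_toReal_sub_le_one h] with x hx
  simp only [signedDensity, projIcc_of_mem _ (abs_le.1 hx)]

lemma integral_eq_integral_rnDeriv_mul [SigmaFinite μ] (h : ν ≤ μ) (w : α → ℝ) :
    ∫ x, w x ∂ν = ∫ x, (ν.rnDeriv μ x).toReal * w x ∂μ := by
  have := Measure.sigmaFinite_of_le μ h
  exact (integral_rnDeriv_smul h.absolutelyContinuous).symm

lemma Integrable.rnDeriv_mul [SigmaFinite μ] (h : ν ≤ μ) {w : α → ℝ} (hw : Integrable w μ) :
    Integrable (fun x => (ν.rnDeriv μ x).toReal * w x) μ := by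
  have := Measure.sigmaFinite_of_le μ h
  exact (integrable_rnDeriv_smul_iff h.absolutelyContinuous).2 (hw.mono_measure h)

lemma Integrable.mul_signedDensity {w : α → ℝ} (hw : Integrable w μ) :
    Integrable (fun x => w x * signedDensity ν₁ ν₂ μ x) μ :=
  hw.mul_bdd (measurable_signedDensity ν₁ ν₂ μ).aestronglyMeasurable
    (ae_of_all _ (abs_signedDensity_le_one ν₁ ν₂ μ))

lemma integral_sub_eq_integral_mul_signedDensity [SigmaFinite μ] (h : ν₁ + ν₂ ≤ μ)
    {w : α → ℝ} (hw : Integrable w μ) :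
    ∫ x, w x ∂ν₁ - ∫ x, w x ∂ν₂ = ∫ x, w x * signedDensity ν₁ ν₂ μ x ∂μ := by
  have h₁ : ν₁ ≤ μ := (Measure.le_add_right le_rfl).trans h
  have h₂ : ν₂ ≤ μ := (Measure.le_add_left le_rfl).trans h
  rw [integral_eq_integral_rnDeriv_mul h₁, integral_eq_integral_rnDeriv_mul h₂,
    ← integral_sub (hw.rnDeriv_mul h₁) (hw.rnDeriv_mul h₂)]
  refine integral_congr_ae ?_
  filter_upwards [signedDensity_ae_eq h] with x hx
  rw [hx]
  ring

end MeasureTheory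

lemma Continuous.integrable_of_measure_compl_eq_zero {α E : Type*} [MeasurableSpace α]
    [TopologicalSpace α] [OpensMeasurableSpace α] [T2Space α] [NormedAddCommGroup E]
    {μ : Measure α} [IsFiniteMeasure μ] {K : Set α} (hK : IsCompact K) (hμK : μ Kᶜ = 0)
    {w : α → E} (hw : Continuous w) : Integrable w μ := by
  rw [← Measure.restrict_eq_self_of_ae_mem (s := K) hμK]
  exact hw.continuousOn.integrableOn_compact hK

lemma continuous_Lf {n : ℕ} {f : ℝ × (Fin n → ℝ) → Fin n → ℝ} {v : ℝ × (Fin n → ℝ) → ℝ}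
    (hf : Continuous f) (hv : ContDiff ℝ 1 v) : Continuous (Lf n f v) :=
  (hv.continuous_fderiv one_ne_zero).clm_apply (continuous_const.prodMk hf)

lemma continuous_Lg {n m : ℕ} {g : ℝ × (Fin n → ℝ) → Fin n → Fin m → ℝ}
    {v : ℝ × (Fin n → ℝ) → ℝ} (hg : Continuous g) (hv : ContDiff ℝ 1 v) (j : Fin m) :
    Continuous fun q => Lg n m g v q j :=
  (hv.continuous_fderiv one_ne_zero).clm_apply
    (continuous_const.prodMk (continuous_pi fun i => (continuous_apply j).comp
      ((continuous_apply i).comp hg)))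

theorem control_extraction_from_liouville_general
    (n m : ℕ) (T : ℝ)
    (f : ℝ × (Fin n → ℝ) → Fin n → ℝ) (g : ℝ × (Fin n → ℝ) → Fin n → Fin m → ℝ)
    (hf : Continuous f) (hg : Continuous g)
    (X : Set (Fin n → ℝ)) (hX : IsCompact X)
    -- nonnegative finite Borel measures on `[0,T] × X`
    (σp σm σh : Fin m → Measure (ℝ × (Fin n → ℝ)))
    (μ : Measure (ℝ × (Fin n → ℝ)))
    [IsFiniteMeasure μ]
    (hμX : μ (Icc (0:ℝ) T ×ˢ X)ᶜ = 0)
    -- a nonnegative finite Borel measure on `X` and one on `X_T`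
    (μ₀ : Measure (Fin n → ℝ))
    (μT : Measure (Fin n → ℝ))
    -- (i) `σ⁺_j + σ⁻_j + σ̂_j = μ` for each `j`
    (hsum : ∀ j, σp j + σm j + σh j = μ)
    -- (ii) Liouville's equation
    (hliouville : ∀ v : ℝ × (Fin n → ℝ) → ℝ, ContDiff ℝ 1 v →
      ∫ y, v (T, y) ∂μT = (∫ y, v (0, y) ∂μ₀) + (∫ q, Lf n f v q ∂μ) +
        ∑ j, ((∫ q, Lg n m g v q j ∂(σp j)) - ∫ q, Lg n m g v q j ∂(σm j))) :
    ∃ utilde : ℝ × (Fin n → ℝ) → Fin m → ℝ, Measurable utilde ∧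
      (∀ q j, utilde q j ∈ Icc (-1:ℝ) 1) ∧
      ∀ v : ℝ × (Fin n → ℝ) → ℝ, ContDiff ℝ 1 v →
        ∫ y, v (T, y) ∂μT = (∫ y, v (0, y) ∂μ₀) +
          ∫ q, (Lf n f v q + ∑ j, Lg n m g v q j * utilde q j) ∂μ := by
  have hK : IsCompact (Icc (0:ℝ) T ×ˢ X) := isCompact_Icc.prod hX
  have hle : ∀ j, σp j + σm j ≤ μ := fun j => hsum j ▸ Measure.le_add_right le_rfl
  refine ⟨fun q j => signedDensity (σp j) (σm j) μ q,
    measurable_pi_lambda _ fun j => measurable_signedDensity _ _ _,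
    fun q j => signedDensity_mem_Icc _ _ _ q, fun v hv => ?_⟩
  have hLf := (continuous_Lf hf hv).integrable_of_measure_compl_eq_zero hK hμX
  have hLg j := (continuous_Lg hg hv j).integrable_of_measure_compl_eq_zero hK hμX
  have hLgu j : Integrable (fun q => Lg n m g v q j * signedDensity (σp j) (σm j) μ q) μ :=
    (hLg j).mul_signedDensity
  rw [hliouville v hv, integral_add hLf (integrable_finsetSum _ fun j _ => hLgu j),
    integral_finsetSum _ fun j _ => hLgu j, add_assoc]
  simp only [integral_sub_eq_integral_mul_signedDensity (hle _) (hLg _)]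

theorem control_extraction_from_liouville
    (n m : ℕ) (T : ℝ) (hT : 0 < T)
    (f : ℝ × (Fin n → ℝ) → Fin n → ℝ) (g : ℝ × (Fin n → ℝ) → Fin n → Fin m → ℝ)
    (hf : Continuous f) (hg : Continuous g)
    (X : Set (Fin n → ℝ)) (hX : IsCompact X)
    (XT : Set (Fin n → ℝ)) (hXT : IsCompact XT) (hXTsub : XT ⊆ X)
    -- nonnegative finite Borel measures on `[0,T] × X`
    (σp σm σh : Fin m → Measure (ℝ × (Fin n → ℝ)))
    (μ : Measure (ℝ × (Fin n → ℝ)))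
    [∀ j, IsFiniteMeasure (σp j)] [∀ j, IsFiniteMeasure (σm j)]
    [∀ j, IsFiniteMeasure (σh j)] [IsFiniteMeasure μ]
    (hσpX : ∀ j, σp j (Icc (0:ℝ) T ×ˢ X)ᶜ = 0) (hσmX : ∀ j, σm j (Icc (0:ℝ) T ×ˢ X)ᶜ = 0)
    (hσhX : ∀ j, σh j (Icc (0:ℝ) T ×ˢ X)ᶜ = 0) (hμX : μ (Icc (0:ℝ) T ×ˢ X)ᶜ = 0)
    -- a nonnegative finite Borel measure on `X` and one on `X_T`
    (μ₀ : Measure (Fin n → ℝ)) [IsFiniteMeasure μ₀] (hμ₀X : μ₀ Xᶜ = 0)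
    (μT : Measure (Fin n → ℝ)) [IsFiniteMeasure μT] (hμTX : μT XTᶜ = 0)
    -- (i) `σ⁺_j + σ⁻_j + σ̂_j = μ` for each `j`
    (hsum : ∀ j, σp j + σm j + σh j = μ)
    -- (ii) Liouville's equation
    (hliouville : ∀ v : ℝ × (Fin n → ℝ) → ℝ, ContDiff ℝ 1 v →
      ∫ y, v (T, y) ∂μT = (∫ y, v (0, y) ∂μ₀) + (∫ q, Lf n f v q ∂μ) +
        ∑ j, ((∫ q, Lg n m g v q j ∂(σp j)) - ∫ q, Lg n m g v q j ∂(σm j))) :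
    ∃ utilde : ℝ × (Fin n → ℝ) → Fin m → ℝ, Measurable utilde ∧
      (∀ q j, utilde q j ∈ Icc (-1:ℝ) 1) ∧
      ∀ v : ℝ × (Fin n → ℝ) → ℝ, ContDiff ℝ 1 v →
        ∫ y, v (T, y) ∂μT = (∫ y, v (0, y) ∂μ₀) +
          ∫ q, (Lf n f v q + ∑ j, Lg n m g v q j * utilde q j) ∂μ :=
  control_extraction_from_liouville_general n m T f g hf hg X hX σp σm σh μ hμX μ₀ μT hsum
    hliouville
end
end
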